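/- Let C ∈ ℂ^{N×N} be Hermitian positive definite and let z, v ∈ ℂ^N with v ≠ 0; write z̃ = C^{−1/2} z, ṽ = C^{−1/2} v. For ν ≥ 0 and α ∈ ℂ define f₁(ν, α) = π^{−N} (1 + ν · Re(v† C⁻¹ v))^{−1} (Re det C)^{−1} exp(−[Re((z−αv)† C⁻¹ (z−αv)) − ν |v† C⁻¹ (z−αv)|² / (1 + ν · Re(v† C⁻¹ v))]). Then the supremum of f₁(ν, α) over ν ≥ 0 and α ∈ ℂ equals π^{−N} (Re det C)^{−1} exp(−‖P⊥_ṽ z̃‖²), attained at ν = 0 and α = (ṽ† ṽ)⁻¹ ṽ† z̃. -/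

import Mathlib

open Matrix
open scoped ComplexOrder

/-- Squared Euclidean norm of a complex vector. -/
noncomputable def nsq {N : ℕ} (w : Fin N → ℂ) : ℝ := (star w ⬝ᵥ w).re

/-- Orthogonal projection matrix `P⊥_q = I − q q†/‖q‖²` onto the orthogonal complement
of the span of `q`. -/
noncomputable def projPerp {N : ℕ} (q : Fin N → ℂ) : Matrix (Fin N) (Fin N) ℂ :=
  1 - (star q ⬝ᵥ q)⁻¹ • vecMulVec q (star q)

lemma vecMulVec_mulVec' {N : ℕ} (q w : Fin N → ℂ) :
    vecMulVec q (star q) *ᵥ w = (star q ⬝ᵥ w) • q := by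
  ext i
  simp only [mulVec, vecMulVec_apply, dotProduct, Pi.smul_apply, smul_eq_mul, Finset.sum_mul]
  exact Finset.sum_congr rfl fun j _ => by ring

lemma projPerp_mulVec {N : ℕ} (q w : Fin N → ℂ) :
    projPerp q *ᵥ w = w - ((star q ⬝ᵥ q)⁻¹ * (star q ⬝ᵥ w)) • q := by
  simp [projPerp, sub_mulVec, smul_mulVec, vecMulVec_mulVec', smul_smul]

lemma sqrt_inv_dot {N : ℕ} {C : Matrix (Fin N) (Fin N) ℂ} (hC : C.PosDef)
    (u w : Fin N → ℂ) :
    star u ⬝ᵥ (C⁻¹ *ᵥ w) =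
      star (((hC.posSemidef.1.eigenvectorUnitary : Matrix (Fin N) (Fin N) ℂ) *
      diagonal (((↑) : ℝ → ℂ) ∘ Real.sqrt ∘ hC.posSemidef.1.eigenvalues) *
      (star hC.posSemidef.1.eigenvectorUnitary : Matrix (Fin N) (Fin N) ℂ))⁻¹ *ᵥ u) ⬝ᵥ (((hC.posSemidef.1.eigenvectorUnitary : Matrix (Fin N) (Fin N) ℂ) *
      diagonal (((↑) : ℝ → ℂ) ∘ Real.sqrt ∘ hC.posSemidef.1.eigenvalues) *
      (star hC.posSemidef.1.eigenvectorUnitary : Matrix (Fin N) (Fin N) ℂ))⁻¹ *ᵥ w) := by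
  set S := ((hC.posSemidef.1.eigenvectorUnitary : Matrix (Fin N) (Fin N) ℂ) *
      diagonal (((↑) : ℝ → ℂ) ∘ Real.sqrt ∘ hC.posSemidef.1.eigenvalues) *
      (star hC.posSemidef.1.eigenvectorUnitary : Matrix (Fin N) (Fin N) ℂ)) with hS
  have hSh : Sᴴ = S := by
    have hf : star (((↑) : ℝ → ℂ) ∘ Real.sqrt ∘ hC.posSemidef.1.eigenvalues) =
        ((↑) : ℝ → ℂ) ∘ Real.sqrt ∘ hC.posSemidef.1.eigenvalues := by
      ext i; simp
    rw [hS, conjTranspose_mul, conjTranspose_mul, diagonal_conjTranspose, hf,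
      ← star_eq_conjTranspose, ← star_eq_conjTranspose, star_star, Matrix.mul_assoc]
  have hSS : S * S = C := by
    have hev := hC.posSemidef.eigenvalues_nonneg
    have hDD : diagonal (((↑) : ℝ → ℂ) ∘ Real.sqrt ∘ hC.posSemidef.1.eigenvalues) *
        diagonal (((↑) : ℝ → ℂ) ∘ Real.sqrt ∘ hC.posSemidef.1.eigenvalues) =
        diagonal (RCLike.ofReal ∘ hC.posSemidef.1.eigenvalues) := by
      rw [diagonal_mul_diagonal]
      congr 1
      ext i
      simp only [Function.comp_apply, ← Complex.ofReal_mul, Real.mul_self_sqrt (hev i)]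
      rfl
    conv_rhs => rw [hC.posSemidef.1.spectral_theorem, Unitary.conjStarAlgAut_apply]
    rw [← hDD]
    simp only [hS, Matrix.mul_assoc]
    rw [← Matrix.mul_assoc (star _ : Matrix (Fin N) (Fin N) ℂ), Unitary.coe_star_mul_self,
      Matrix.one_mul]
  have hherm : (S⁻¹)ᴴ = S⁻¹ := by rw [conjTranspose_nonsing_inv, hSh]
  have hCinv : C⁻¹ = S⁻¹ * S⁻¹ := by
    rw [← hSS, Matrix.mul_inv_rev]
  rw [hCinv, ← Matrix.mulVec_mulVec, Matrix.star_mulVec, hherm,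
    ← Matrix.dotProduct_mulVec]

lemma dot_star_self_re_pos {N : ℕ} {q : Fin N → ℂ} (hq : q ≠ 0) :
    0 < (star q ⬝ᵥ q).re :=
  (Complex.lt_def.mp (Matrix.dotProduct_star_self_pos_iff.mpr hq)).1

lemma dot_star_self_eq_re {N : ℕ} (q : Fin N → ℂ) :
    star q ⬝ᵥ q = ((star q ⬝ᵥ q).re : ℂ) := by
  have h : 0 ≤ star q ⬝ᵥ q := dotProduct_star_self_nonneg q
  have him := (Complex.le_def.mp h).2
  exact Complex.ext rfl (by simpa using him.symm)

lemma pyth {N : ℕ} (q w : Fin N → ℂ) (hq : q ≠ 0) :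
    nsq (projPerp q *ᵥ w) =
      nsq w - ‖star q ⬝ᵥ w‖ ^ 2 / (star q ⬝ᵥ q).re := by
  have hg : 0 < (star q ⬝ᵥ q).re := dot_star_self_re_pos hq
  set g : ℝ := (star q ⬝ᵥ q).re with hgdef
  have hsg : star q ⬝ᵥ q = (g : ℂ) := dot_star_self_eq_re q
  set b : ℂ := star q ⬝ᵥ w with hbdef
  have hbw : star w ⬝ᵥ q = star b := by rw [hbdef, star_dotProduct]
  have hgne : (g : ℂ) ≠ 0 := by exact_mod_cast hg.ne'
  have key : star (projPerp q *ᵥ w) ⬝ᵥ (projPerp q *ᵥ w) =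
      star w ⬝ᵥ w - ((‖b‖ ^ 2 / g : ℝ) : ℂ) := by
    rw [projPerp_mulVec, hsg]
    simp only [star_sub, star_smul, sub_dotProduct, dotProduct_sub, smul_dotProduct,
      dotProduct_smul, smul_eq_mul, ← hbdef, hbw, hsg]
    simp only [star_mul', star_inv₀, Complex.star_def, Complex.conj_ofReal]
    have habs : (starRingEnd ℂ) b * b = ((‖b‖ ^ 2 : ℝ) : ℂ) := by
      rw [← Complex.normSq_eq_norm_sq, mul_comm, Complex.mul_conj]
    push_cast
    push_cast at habs
    have h2 : (starRingEnd ℂ) b - ((g : ℂ))⁻¹ * (starRingEnd ℂ) b * (g : ℂ) = 0 := by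
      rw [mul_right_comm, inv_mul_cancel₀ hgne, one_mul, sub_self]
    rw [h2, mul_zero, sub_zero]
    linear_combination (-((g : ℂ))⁻¹) * habs
  rw [nsq, nsq, key, Complex.sub_re, Complex.ofReal_re]

/-- Appendix C of the paper. The likelihood `f₁(ν,α)` of the
perturbation model with `Σ = v v†` and known noise covariance `C` has supremum over
`ν ≥ 0`, `α ∈ ℂ` equal to `π^(−N)(Re det C)⁻¹ exp(−‖P⊥_ṽ z̃‖²)`, attained at `ν = 0`,
`α = (ṽ†ṽ)⁻¹ṽ†z̃`; hence the two-step GLRT for `Σ = v v†` is equivalent to the AMF. -/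
theorem stmt_17 (N : ℕ) (C : Matrix (Fin N) (Fin N) ℂ) (hC : C.PosDef)
    (z v : Fin N → ℂ) (hv : v ≠ 0) :
    let zt : Fin N → ℂ := ((hC.posSemidef.1.eigenvectorUnitary : Matrix (Fin N) (Fin N) ℂ) *
      diagonal (((↑) : ℝ → ℂ) ∘ Real.sqrt ∘ hC.posSemidef.1.eigenvalues) *
      (star hC.posSemidef.1.eigenvectorUnitary : Matrix (Fin N) (Fin N) ℂ))⁻¹ *ᵥ z
    let vt : Fin N → ℂ := ((hC.posSemidef.1.eigenvectorUnitary : Matrix (Fin N) (Fin N) ℂ) *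
      diagonal (((↑) : ℝ → ℂ) ∘ Real.sqrt ∘ hC.posSemidef.1.eigenvalues) *
      (star hC.posSemidef.1.eigenvectorUnitary : Matrix (Fin N) (Fin N) ℂ))⁻¹ *ᵥ v
    let f₁ : ℝ → ℂ → ℝ := fun ν α =>
      Real.pi ^ (-(N : ℝ)) * (1 + ν * (star v ⬝ᵥ (C⁻¹ *ᵥ v)).re)⁻¹ * (C.det.re)⁻¹ *
        Real.exp (-((star (z - α • v) ⬝ᵥ (C⁻¹ *ᵥ (z - α • v))).re -
          ν * ‖star v ⬝ᵥ (C⁻¹ *ᵥ (z - α • v))‖ ^ 2 /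
            (1 + ν * (star v ⬝ᵥ (C⁻¹ *ᵥ v)).re)))
    let α₁ : ℂ := (star vt ⬝ᵥ vt)⁻¹ * (star vt ⬝ᵥ zt)
    (∀ ν : ℝ, 0 ≤ ν → ∀ α : ℂ,
        f₁ ν α ≤ Real.pi ^ (-(N : ℝ)) * (C.det.re)⁻¹ *
          Real.exp (-(nsq (projPerp vt *ᵥ zt)))) ∧
    f₁ 0 α₁ = Real.pi ^ (-(N : ℝ)) * (C.det.re)⁻¹ *
      Real.exp (-(nsq (projPerp vt *ᵥ zt))) := by
  intro zt vt f₁ α₁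
  have hdot := sqrt_inv_dot hC
  -- vt ≠ 0
  have hpos : (0 : ℂ) < star vt ⬝ᵥ vt := by
    have h := hC.inv.dotProduct_mulVec_pos hv
    rwa [hdot v v] at h
  have hvt : vt ≠ 0 := Matrix.dotProduct_star_self_pos_iff.mp hpos
  set g : ℝ := (star vt ⬝ᵥ vt).re with hgdef
  have hg : 0 < g := dot_star_self_re_pos hvt
  have hsg : star vt ⬝ᵥ vt = (g : ℂ) := dot_star_self_eq_re vt
  have hgne : (g : ℂ) ≠ 0 := by exact_mod_cast hg.ne'
  have hgv : (star v ⬝ᵥ (C⁻¹ *ᵥ v)).re = g := by rw [hdot v v]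
  -- tilde forms
  have hw : ∀ α : ℂ, ((hC.posSemidef.1.eigenvectorUnitary : Matrix (Fin N) (Fin N) ℂ) *
      diagonal (((↑) : ℝ → ℂ) ∘ Real.sqrt ∘ hC.posSemidef.1.eigenvalues) *
      (star hC.posSemidef.1.eigenvectorUnitary : Matrix (Fin N) (Fin N) ℂ))⁻¹ *ᵥ (z - α • v) = zt - α • vt := by
    intro α
    simp [mulVec_sub, mulVec_smul, zt, vt]
  have hQ : ∀ α : ℂ, (star (z - α • v) ⬝ᵥ (C⁻¹ *ᵥ (z - α • v))).re
      = nsq (zt - α • vt) := by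
    intro α; rw [hdot, hw, nsq]
  have hb : ∀ α : ℂ, star v ⬝ᵥ (C⁻¹ *ᵥ (z - α • v)) = star vt ⬝ᵥ (zt - α • vt) := by
    intro α; rw [hdot, hw]
  -- projection kills vt
  have hker : projPerp vt *ᵥ vt = 0 := by
    rw [projPerp_mulVec, hsg, inv_mul_cancel₀ hgne, one_smul, sub_self]
  have hE : ∀ α : ℂ, nsq (projPerp vt *ᵥ zt)
      = nsq (zt - α • vt) - ‖star vt ⬝ᵥ (zt - α • vt)‖ ^ 2 / g := by
    intro α
    have hperp : projPerp vt *ᵥ zt = projPerp vt *ᵥ (zt - α • vt) := by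
      rw [mulVec_sub, mulVec_smul, hker, smul_zero, sub_zero]
    rw [hperp, pyth vt _ hvt, hgdef]
  have hdet : 0 < C.det.re := (Complex.lt_def.mp hC.det_pos).1
  constructor
  · intro ν hν α
    have hden : 0 < 1 + ν * g := by positivity
    set Q : ℝ := nsq (zt - α • vt)
    set B : ℝ := ‖star vt ⬝ᵥ (zt - α • vt)‖ ^ 2 with hBdef
    have hB : 0 ≤ B := by positivity
    have hfrac : ν * B / (1 + ν * g) ≤ B / g := by
      rw [div_le_div_iff₀ hden hg]
      nlinarith
    have hexp : nsq (projPerp vt *ᵥ zt) ≤ Q - ν * B / (1 + ν * g) := by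
      rw [hE α]
      linarith
    have h1 : (1 + ν * g)⁻¹ ≤ 1 := by
      rw [inv_le_one_iff₀]; right; nlinarith
    calc f₁ ν α = Real.pi ^ (-(N : ℝ)) * (1 + ν * g)⁻¹ * (C.det.re)⁻¹ *
          Real.exp (-(Q - ν * B / (1 + ν * g))) := by
            simp only [f₁, hgv, hQ α, hb α, hBdef]
            rfl
      _ ≤ Real.pi ^ (-(N : ℝ)) * 1 * (C.det.re)⁻¹ *
          Real.exp (-(nsq (projPerp vt *ᵥ zt))) := by
            gcongr
      _ = Real.pi ^ (-(N : ℝ)) * (C.det.re)⁻¹ *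
          Real.exp (-(nsq (projPerp vt *ᵥ zt))) := by ring
  · have hb1 : star vt ⬝ᵥ (zt - α₁ • vt) = 0 := by
      rw [dotProduct_sub, dotProduct_smul, smul_eq_mul, hsg]
      simp only [α₁, hsg]
      field_simp
      simp
    have hQE : nsq (projPerp vt *ᵥ zt) = nsq (zt - α₁ • vt) := by
      rw [hE α₁, hb1]
      simp
    simp only [f₁, hgv, hQ α₁, hb α₁, hb1, hQE]
    simp
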